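/- Let F be a field, let R = F[X; ℕ×ℕ] be the additive monoid ring of the monoid ℕ₀ × ℕ₀ over F, let m be the maximal ideal of R consisting of all elements with zero constant term, and let D = R_m be the localization of R at m. Then the ideal of D generated by the images of the monomials X^{(1,0)} and X^{(0,1)} is a proper ideal that is not contained in any proper principal ideal of D; in particular D does not satisfy the PC condition. -/

import Mathlib

/-!
Suppose a nonunit `c = r / s` of `D` divides both `X = X^{(1,0)}` and `Y = X^{(0,1)}`. Clearing
denominators gives `X t = r p` and `Y t' = r p'` in `R` with `r ∈ m` and `t, t' ∉ m`. Setting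
`Y = 0` maps `R` onto the domain `F[X; ℕ]`; the first equation shows that `r` survives this
specialisation, so the second one forces `p'` to vanish under it, whence `p' ∈ m`. Comparing
coefficients of `Y` in `Y t' = r p'` then gives `t'(0) = r(0) p'(0,1) + r(0,1) p'(0) = 0`, a
contradiction.
-/

open scoped Classical

/-- The "constant term" homomorphism of a monoid algebra `F[X; M]`, for a monoid `M` in
which `a + b = 0` forces `a = b = 0`; it sends `a₁X^{α₁} + ⋯ + aₙX^{αₙ}` to its
coefficient at the identity `0` of `M` (see `constantTermHom_apply`). -/
noncomputable def constantTermHom (F M : Type*) [Field F] [AddCommMonoid M]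
    (hM : ∀ a b : M, a + b = 0 → a = 0 ∧ b = 0) : AddMonoidAlgebra F M →ₐ[F] F :=
  AddMonoidAlgebra.lift F F M
    { toFun := fun a => if a.toAdd = 0 then 1 else 0
      map_one' := by simp
      map_mul' := fun a b => by
        rcases em (a.toAdd = 0) with ha | ha
        · rcases em (b.toAdd = 0) with hb | hb
          · simp [ha, hb]
          · have h : a.toAdd + b.toAdd ≠ 0 := fun h => hb (hM _ _ h).2
            simp [ha, hb, toAdd_mul, h]
        · have h : a.toAdd + b.toAdd ≠ 0 := fun h => ha (hM _ _ h).1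
          simp [ha, toAdd_mul, h] }

theorem constantTermHom_apply (F M : Type*) [Field F] [AddCommMonoid M]
    (hM : ∀ a b : M, a + b = 0 → a = 0 ∧ b = 0) (f : AddMonoidAlgebra F M) :
    constantTermHom F M hM f = f.coeff 0 := by
  classical
  rw [constantTermHom, AddMonoidAlgebra.lift_apply]
  simp only [MonoidHom.coe_mk, OneHom.coe_mk, toAdd_ofAdd, smul_eq_mul, mul_ite, mul_one,
    mul_zero]
  rw [Finsupp.sum_ite_eq' f.coeff 0 (fun _ b => b)]
  split
  · rfl
  · next h => exact (Finsupp.notMem_support_iff.mp h).symm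

/-- The augmentation ideal of the monoid algebra `F[X; M]`, consisting of all elements
with zero constant term (zero coefficient at the identity of `M`). -/
noncomputable def augIdeal (F M : Type*) [Field F] [AddCommMonoid M]
    (hM : ∀ a b : M, a + b = 0 → a = 0 ∧ b = 0) : Ideal (AddMonoidAlgebra F M) :=
  RingHom.ker (constantTermHom F M hM)

theorem mem_augIdeal_iff (F M : Type*) [Field F] [AddCommMonoid M]
    (hM : ∀ a b : M, a + b = 0 → a = 0 ∧ b = 0) (f : AddMonoidAlgebra F M) :
    f ∈ augIdeal F M hM ↔ f.coeff 0 = 0 := by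
  rw [augIdeal, RingHom.mem_ker, constantTermHom_apply]

/-- The augmentation ideal is a maximal ideal. -/
instance augIdeal_isMaximal (F M : Type*) [Field F] [AddCommMonoid M]
    {hM : ∀ a b : M, a + b = 0 → a = 0 ∧ b = 0} : (augIdeal F M hM).IsMaximal :=
  RingHom.ker_isMaximal_of_surjective _ (fun c =>
    ⟨AddMonoidAlgebra.single 0 c, by simp [constantTermHom_apply]⟩)

theorem natnat_pos_monoid : ∀ a b : ℕ × ℕ, a + b = 0 → a = 0 ∧ b = 0 := fun a b h => by
  simp only [Prod.ext_iff, Prod.fst_add, Prod.snd_add, Prod.fst_zero, Prod.snd_zero] at h ⊢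
  omega

/-- The image in `D = R_m` of the monomial `X^α` of `R = F[X; ℕ × ℕ]`. -/
noncomputable def monomialImage (F : Type*) [Field F] (α : ℕ × ℕ) :
    Localization.AtPrime (augIdeal F (ℕ × ℕ) natnat_pos_monoid) :=
  algebraMap (AddMonoidAlgebra F (ℕ × ℕ))
    (Localization.AtPrime (augIdeal F (ℕ × ℕ) natnat_pos_monoid))
    (AddMonoidAlgebra.single α (1 : F))

open AddMonoidAlgebra

noncomputable def evalSndZero (F M N : Type*) [Field F] [AddMonoid M] [AddCommMonoid N]
    (hN : ∀ a b : N, a + b = 0 → a = 0 ∧ b = 0) :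
    AddMonoidAlgebra F (M × N) →+* AddMonoidAlgebra F M :=
  (mapRingHom M (constantTermHom F N hN).toRingHom).comp curryRingEquiv.toRingHom

theorem coeff_evalSndZero (F M N : Type*) [Field F] [AddMonoid M] [AddCommMonoid N]
    (hN : ∀ a b : N, a + b = 0 → a = 0 ∧ b = 0) (f : AddMonoidAlgebra F (M × N)) (m : M) :
    (evalSndZero F M N hN f).coeff m = f.coeff (m, 0) := by
  simp [evalSndZero, constantTermHom_apply, curryRingEquiv, curryAddEquiv]

theorem coeff_mul_zero_one {R : Type*} [Semiring R] (f g : AddMonoidAlgebra R (ℕ × ℕ)) :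
    (f * g).coeff (0, 1) = f.coeff 0 * g.coeff (0, 1) + f.coeff (0, 1) * g.coeff 0 := by
  rw [coeff_mul_antidiag f g (0, 1) {((0, 0), (0, 1)), ((0, 1), (0, 0))}]
  · rw [Finset.sum_pair (by decide)]
    rfl
  · rintro ⟨⟨a, b⟩, ⟨c, d⟩⟩
    simp only [Finset.mem_insert, Finset.mem_singleton, Prod.ext_iff, Prod.mk_add_mk]
    omega

theorem IsLocalization.exists_mem_dvd_mul_of_mk'_dvd {R S : Type*} [CommRing R] [CommRing S]
    [Algebra R S] {M : Submonoid R} [IsLocalization M S] {r x : R} {s : M}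
    (h : mk' S r s ∣ algebraMap R S x) : ∃ t ∈ M, r ∣ x * t := by
  obtain ⟨d, hd⟩ := h
  obtain ⟨⟨p, q⟩, rfl⟩ := mk'_surjective M d
  rw [← mk'_mul, ← mk'_one (M := M) S x, mk'_eq_iff_eq] at hd
  obtain ⟨u, hu⟩ := exists_of_eq (M := M) hd
  refine ⟨s * q * u, (s * q * u).2, p * u, ?_⟩
  simp only [Submonoid.coe_mul, OneMemClass.coe_one, one_mul] at hu ⊢
  linear_combination hu

section NatNat

variable {F : Type*} [Field F]

theorem coeff_zero_ne_zero_of_dvd_X_mul_of_dvd_Y_mul {r t t' : AddMonoidAlgebra F (ℕ × ℕ)}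
    (ht : t.coeff 0 ≠ 0) (ht' : t'.coeff 0 ≠ 0)
    (hX : r ∣ single (1, 0) 1 * t) (hY : r ∣ single (0, 1) 1 * t') : r.coeff 0 ≠ 0 := by
  intro hr
  obtain ⟨p, hp⟩ := hX
  obtain ⟨p', hp'⟩ := hY
  have hℕ : ∀ a b : ℕ, a + b = 0 → a = 0 ∧ b = 0 := fun _ _ => Nat.add_eq_zero_iff.mp
  let φ := evalSndZero F ℕ ℕ hℕ
  have hφ_ne_zero {f : AddMonoidAlgebra F (ℕ × ℕ)} {m : ℕ} (hf : f.coeff (m, 0) ≠ 0) : φ f ≠ 0 :=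
    fun h => hf (by rw [← coeff_evalSndZero F ℕ ℕ hℕ, h]; rfl)
  have hφr : φ r ≠ 0 := by
    have hXt := congrArg φ hp
    rw [map_mul, map_mul] at hXt
    refine left_ne_zero_of_mul (hXt ▸ mul_ne_zero ?_ ?_)
    · exact hφ_ne_zero (m := 1) (by simp)
    · exact hφ_ne_zero ht
  have hp'0 : p'.coeff 0 = 0 := by
    have hφY : φ (single (0, 1) 1) = 0 := by
      ext m
      simp [φ, coeff_evalSndZero]
    have hYt := congrArg φ hp'
    rw [map_mul, map_mul, hφY, zero_mul, eq_comm, mul_eq_zero, or_iff_right hφr] at hYt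
    rw [← Prod.mk_zero_zero, ← coeff_evalSndZero F ℕ ℕ hℕ, hYt]
    rfl
  have hcoeff := congrArg (fun f => f.coeff (0, 1)) hp'
  simp [coeff_mul_zero_one, hr, hp'0] at hcoeff
  exact ht' hcoeff

theorem not_isUnit_monomialImage {α : ℕ × ℕ} (hα : α ≠ 0) : ¬IsUnit (monomialImage F α) := by
  rw [monomialImage, IsLocalization.AtPrime.isUnit_to_map_iff _ (augIdeal F (ℕ × ℕ) _),
    Ideal.mem_primeCompl_iff, not_not, mem_augIdeal_iff, coeff_single, Finsupp.single_apply,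
    if_neg hα]

theorem isUnit_of_dvd_monomialImage
    {c : Localization.AtPrime (augIdeal F (ℕ × ℕ) natnat_pos_monoid)}
    (hX : c ∣ monomialImage F (1, 0)) (hY : c ∣ monomialImage F (0, 1)) : IsUnit c := by
  obtain ⟨⟨r, s⟩, rfl⟩ := IsLocalization.mk'_surjective (augIdeal F (ℕ × ℕ) _).primeCompl c
  obtain ⟨t, ht, hrt⟩ := IsLocalization.exists_mem_dvd_mul_of_mk'_dvd hX
  obtain ⟨t', ht', hrt'⟩ := IsLocalization.exists_mem_dvd_mul_of_mk'_dvd hY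
  rw [IsLocalization.AtPrime.isUnit_mk'_iff, Ideal.mem_primeCompl_iff, mem_augIdeal_iff]
  rw [Ideal.mem_primeCompl_iff, mem_augIdeal_iff] at ht ht'
  exact coeff_zero_ne_zero_of_dvd_X_mul_of_dvd_Y_mul ht ht' hrt hrt'

end NatNat

/-- Let `F` be a field, `R = F[X; ℕ × ℕ]` the monoid ring of `ℕ₀ × ℕ₀`,
`m` its maximal ideal of elements with zero constant term, and `D = R_m`. Then the ideal
of `D` generated by the images of `X^{(1,0)}` and `X^{(0,1)}` is proper but is not
contained in any proper principal ideal of `D`; in particular `D` does not satisfy the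
PC condition. -/
theorem localization_monoidAlgebra_natnat_not_pc (F : Type*) [Field F] :
    (Ideal.span {monomialImage F (1, 0), monomialImage F (0, 1)} ≠
      (⊤ : Ideal (Localization.AtPrime (augIdeal F (ℕ × ℕ) natnat_pos_monoid)))) ∧
    (∀ c : Localization.AtPrime (augIdeal F (ℕ × ℕ) natnat_pos_monoid),
      Ideal.span {monomialImage F (1, 0), monomialImage F (0, 1)} ≤ Ideal.span {c} →
      Ideal.span ({c} : Set (Localization.AtPrime (augIdeal F (ℕ × ℕ) natnat_pos_monoid))) = ⊤) ∧
    ¬(∀ a b : Localization.AtPrime (augIdeal F (ℕ × ℕ) natnat_pos_monoid),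
      Ideal.span {a, b} ≠ ⊤ →
      ∃ c, Ideal.span {a, b} ≤ Ideal.span {c} ∧
        Ideal.span ({c} : Set (Localization.AtPrime (augIdeal F (ℕ × ℕ) natnat_pos_monoid))) ≠ ⊤) := by
  have hproper : Ideal.span {monomialImage F (1, 0), monomialImage F (0, 1)} ≠ ⊤ := by
    refine ne_top_of_le_ne_top (IsLocalRing.maximalIdeal.isMaximal _).ne_top ?_
    rw [Ideal.span_le]
    rintro _ (rfl | rfl) <;> exact not_isUnit_monomialImage (by decide)
  have hnot_principal (c : Localization.AtPrime (augIdeal F (ℕ × ℕ) natnat_pos_monoid))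
      (hc : Ideal.span {monomialImage F (1, 0), monomialImage F (0, 1)} ≤ Ideal.span {c}) :
      Ideal.span {c} = ⊤ := by
    have hdvd {a} (ha : a ∈ ({monomialImage F (1, 0), monomialImage F (0, 1)} : Set _)) : c ∣ a :=
      Ideal.mem_span_singleton.mp (hc (Ideal.subset_span ha))
    exact Ideal.span_singleton_eq_top.mpr
      (isUnit_of_dvd_monomialImage (hdvd (by simp)) (hdvd (by simp)))
  refine ⟨hproper, hnot_principal, fun hPC => ?_⟩
  obtain ⟨c, hc, hc_ne_top⟩ := hPC _ _ hproper
  exact hc_ne_top (hnot_principal c hc)
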